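/- Let H be a self-adjoint operator on a finite-dimensional Hilbert space, and suppose there exist a unitary T, a self-adjoint unitary C (C² = 1), and self-adjoint operators S₃, Q₃ with integer-or-half-integer spectrum such that: H commutes with T, C, S₃, Q₃; [S₃, Q₃] = 0; T commutes with S₃ and Q₃; and C T C = (−1)^{S₃ − Q₃ + 1} T (i.e., C T C⁻¹ = e^{iπ(S₃ − Q₃ + 1)} T), C S₃ C = Q₃, C Q₃ C = S₃. Then for any simultaneous eigenvector v of H, T, S₃, Q₃ with T-eigenvalue t, S₃-eigenvalue s, Q₃-eigenvalue q, the vector Cv is an eigenvector of H with the same energy, of T with eigenvalue (−1)^{s − q + 1} t, of S₃ with eigenvalue q, and of Q₃ with eigenvalue s. In particular, if (s, q, t) ≠ (q, s, (−1)^{s−q+1} t), then v and Cv are linearly independent degenerate eigenvectors of H. -/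

import Mathlib

/-- Spin-charge flip degeneracy: for a Hamiltonian commuting with translation `T`,
spin-charge flip `C`, and the commuting half-integer-spectrum operators `S₃, Q₃`,
with `C T C = (-1)^{S₃ - Q₃ + 1} T`, `C S₃ C = Q₃`, `C Q₃ C = S₃`, any simultaneous
eigenvector `v` gives a degenerate partner `C v` with the stated quantum numbers,
linearly independent of `v` whenever the quantum numbers differ. -/
theorem stmt_8 {E : Type*} [NormedAddCommGroup E] [InnerProductSpace ℂ E]
    [FiniteDimensional ℂ E]
    (H T C S3 Q3 : E →ₗ[ℂ] E)
    (hHsa : ∀ x y : E, (inner ℂ (H x) y : ℂ) = inner ℂ x (H y))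
    (hTunit : ∀ x y : E, (inner ℂ (T x) (T y) : ℂ) = inner ℂ x y)
    (hCsa : ∀ x y : E, (inner ℂ (C x) y : ℂ) = inner ℂ x (C y))
    (hC2 : C ∘ₗ C = LinearMap.id)
    (hS3sa : ∀ x y : E, (inner ℂ (S3 x) y : ℂ) = inner ℂ x (S3 y))
    (hQ3sa : ∀ x y : E, (inner ℂ (Q3 x) y : ℂ) = inner ℂ x (Q3 y))
    (hspecS : ∀ μ ∈ spectrum ℂ S3, ∃ n : ℤ, μ = (n : ℂ) / 2)
    (hspecQ : ∀ μ ∈ spectrum ℂ Q3, ∃ n : ℤ, μ = (n : ℂ) / 2)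
    (hHT : H ∘ₗ T = T ∘ₗ H) (hHC : H ∘ₗ C = C ∘ₗ H)
    (hHS : H ∘ₗ S3 = S3 ∘ₗ H) (hHQ : H ∘ₗ Q3 = Q3 ∘ₗ H)
    (hSQ : S3 ∘ₗ Q3 = Q3 ∘ₗ S3)
    (hTS : T ∘ₗ S3 = S3 ∘ₗ T) (hTQ : T ∘ₗ Q3 = Q3 ∘ₗ T)
    (hCS : C ∘ₗ S3 ∘ₗ C = Q3) (hCQ : C ∘ₗ Q3 ∘ₗ C = S3)
    (hCTC : ∀ (w : E) (s q : ℝ), S3 w = (s : ℂ) • w → Q3 w = (q : ℂ) • w →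
      (C ∘ₗ T ∘ₗ C) w = Complex.exp (Real.pi * Complex.I * ((s : ℂ) - q + 1)) • T w)
    (v : E) (hv : v ≠ 0) (En : ℝ) (t : ℂ) (s q : ℝ)
    (hvH : H v = (En : ℂ) • v) (hvT : T v = t • v)
    (hvS : S3 v = (s : ℂ) • v) (hvQ : Q3 v = (q : ℂ) • v) :
    H (C v) = (En : ℂ) • C v ∧
    T (C v) = (Complex.exp (Real.pi * Complex.I * ((s : ℂ) - q + 1)) * t) • C v ∧
    S3 (C v) = (q : ℂ) • C v ∧
    Q3 (C v) = (s : ℂ) • C v ∧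
    ((s, q, t) ≠ (q, s, Complex.exp (Real.pi * Complex.I * ((s : ℂ) - q + 1)) * t) →
      LinearIndependent ℂ ![v, C v]) := by

  have hCC : ∀ x : E, C (C x) = x := fun x => congrArg (fun L => L x) hC2
  have hCv0 : C v ≠ 0 := fun h => hv (by rw [← hCC v, h, map_zero])
  -- S3 (C v) = q • C v
  have hS : S3 (C v) = (q : ℂ) • C v := by
    have h1 : C (Q3 (C (C v))) = S3 (C v) := congrArg (fun L => L (C v)) hCQ
    rw [hCC v, hvQ, map_smul] at h1
    exact h1.symm
  have hQ : Q3 (C v) = (s : ℂ) • C v := by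
    have h1 : C (S3 (C (C v))) = Q3 (C v) := congrArg (fun L => L (C v)) hCS
    rw [hCC v, hvS, map_smul] at h1
    exact h1.symm
  have hH : H (C v) = (En : ℂ) • C v := by
    have h1 : H (C v) = C (H v) := congrArg (fun L => L v) hHC
    rw [h1, hvH, map_smul]
  set e1 : ℂ := Complex.exp (Real.pi * Complex.I * ((s : ℂ) - q + 1)) with he1
  set e2 : ℂ := Complex.exp (Real.pi * Complex.I * ((q : ℂ) - s + 1)) with he2
  have hee : e1 * e2 = 1 := by
    rw [he1, he2, ← Complex.exp_add]
    have : (Real.pi : ℂ) * Complex.I * ((s : ℂ) - q + 1) +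
        (Real.pi : ℂ) * Complex.I * ((q : ℂ) - s + 1) = 2 * Real.pi * Complex.I := by
      ring
    rw [this, Complex.exp_two_pi_mul_I]
  have hT : T (C v) = (e1 * t) • C v := by
    have h1 := hCTC (C v) q s hS hQ
    have h2 : (C ∘ₗ T ∘ₗ C) (C v) = t • C v := by
      simp only [LinearMap.comp_apply, hCC v, hvT, map_smul]
    rw [h2] at h1
    have h3 := congrArg (fun x => e1 • x) h1
    rw [← he2] at h3
    simp only [smul_smul, hee, one_smul] at h3
    exact h3.symm
  refine ⟨hH, hT, hS, hQ, fun hne => ?_⟩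
  rw [LinearIndependent.pair_iff]
  intro a b hab
  by_cases hsq : s = q
  · -- then t ≠ e1 * t
    have ht : t ≠ e1 * t := by
      intro h
      exact hne (by rw [hsq, ← h])
    have h1 := congrArg T hab
    rw [map_add, map_smul, map_smul, hvT, hT, map_zero] at h1
    have h2 := congrArg (fun x => t • x) hab
    simp only [smul_add, smul_smul, smul_zero] at h2
    have h3 : (b * (e1 * t) - b * t) • C v = 0 := by
      have h := h1.trans h2.symm
      linear_combination (norm := module) h
    have hb : b = 0 := by
      rcases smul_eq_zero.mp h3 with h | h
      · have hbb : b * (e1 * t - t) = 0 := by linear_combination h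
        rcases mul_eq_zero.mp hbb with h' | h'
        · exact h'
        · exact absurd h' (sub_ne_zero.mpr (Ne.symm ht))
      · exact absurd h hCv0
    rw [hb, zero_smul, add_zero] at hab
    exact ⟨smul_eq_zero.mp hab |>.resolve_right hv, hb⟩
  · have h1 := congrArg S3 hab
    rw [map_add, map_smul, map_smul, hvS, hS, map_zero] at h1
    have h2 := congrArg (fun x => (s : ℂ) • x) hab
    simp only [smul_add, smul_smul, smul_zero] at h2
    have h3 : (b * (q : ℂ) - b * s) • C v = 0 := by
      have h := h1.trans h2.symm
      linear_combination (norm := module) h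
    have hb : b = 0 := by
      rcases smul_eq_zero.mp h3 with h | h
      · have : b * ((q : ℂ) - s) = 0 := by linear_combination h
        rcases mul_eq_zero.mp this with h' | h'
        · exact h'
        · exfalso
          apply hsq
          have : (q : ℂ) = s := by linear_combination h'
          exact_mod_cast this.symm
      · exact absurd h hCv0
    rw [hb, zero_smul, add_zero] at hab
    exact ⟨smul_eq_zero.mp hab |>.resolve_right hv, hb⟩
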